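/- Let A be the Neumann Laplacian on L²(0,π) and λ > 0. Then for 1/2 < α < 3/4 the functions b¹(ξ) = -cosh(√λ(π-ξ))/(√λ sinh(√λ π)) and b²(ξ) = cosh(√λ ξ)/(√λ sinh(√λ π)) belong to the domain D((λ - A)^α) of the fractional power (λ-A)^α. -/

import Mathlib

open Real Set MeasureTheory

/-! The cosine coefficients of `b¹` and `b²` are explicit: an antiderivative of
`cosh (a ξ) cos (n ξ)` gives `⟨b², cos (n·)⟩ = (-1)ⁿ / (λ + n²)`, and the reflection `ξ ↦ π - ξ`
gives `⟨b¹, cos (n·)⟩ = -1 / (λ + n²)`. The series defining the `D((λ-A)^α)`-norm is then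
dominated by `∑ (λ + n²)^(2α-2)`, which converges because `4α - 4 < -1`. -/

theorem summable_rpow_add_sq {l s : ℝ} (hl : 0 ≤ l) (hs : s < -1 / 2) :
    Summable fun n : ℕ => (l + (n : ℝ) ^ 2) ^ s := by
  refine (summable_nat_add_iff 1).mp <| Summable.of_nonneg_of_le
    (fun n => rpow_nonneg (by positivity) _) (fun n => ?_)
    ((summable_nat_add_iff 1).mpr (summable_nat_rpow.mpr (by linarith : 2 * s < -1)))
  have hn : (0 : ℝ) < ((n + 1 : ℕ) : ℝ) := by positivity
  calc (l + ((n + 1 : ℕ) : ℝ) ^ 2) ^ s ≤ (((n + 1 : ℕ) : ℝ) ^ 2) ^ s :=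
        rpow_le_rpow_of_nonpos (by positivity) (by linarith) (by linarith)
    _ = ((n + 1 : ℕ) : ℝ) ^ (2 * s) := by
        rw [← rpow_natCast _ 2, ← rpow_mul hn.le]; norm_num

theorem integral_cosh_mul_cos_nat_mul {a : ℝ} (ha : a ≠ 0) (n : ℕ) :
    ∫ ξ in (0)..π, cosh (a * ξ) * cos (n * ξ) =
      (-1) ^ n * a * sinh (a * π) / (a ^ 2 + n ^ 2) := by
  have hden : a ^ 2 + (n : ℝ) ^ 2 ≠ 0 := by positivity
  have hderiv : ∀ ξ : ℝ, HasDerivAt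
      (fun ξ => (a * sinh (a * ξ) * cos (n * ξ) + n * cosh (a * ξ) * sin (n * ξ)) /
        (a ^ 2 + n ^ 2))
      (cosh (a * ξ) * cos (n * ξ)) ξ := by
    intro ξ
    have hax := (hasDerivAt_id ξ).const_mul a
    have hnx := (hasDerivAt_id ξ).const_mul (n : ℝ)
    simp only [id, mul_one] at hax hnx
    refine ((((hax.sinh.const_mul a).mul hnx.cos).add
      ((hax.cosh.const_mul (n : ℝ)).mul hnx.sin)).div_const (a ^ 2 + n ^ 2)).congr_deriv ?_
    field_simp
    ring
  rw [intervalIntegral.integral_eq_sub_of_hasDerivAt (fun ξ _ => hderiv ξ)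
    (by apply Continuous.intervalIntegrable; fun_prop)]
  simp [sin_nat_mul_pi, cos_nat_mul_pi]
  ring

theorem integral_cosh_mul_pi_sub_mul_cos_nat_mul {a : ℝ} (ha : a ≠ 0) (n : ℕ) :
    ∫ ξ in (0)..π, cosh (a * (π - ξ)) * cos (n * ξ) = a * sinh (a * π) / (a ^ 2 + n ^ 2) := by
  have hreflect : ∀ ξ : ℝ, cos (n * (π - ξ)) = (-1) ^ n * cos (n * ξ) := fun ξ => by
    rw [mul_sub, cos_nat_mul_pi_sub]
  calc ∫ ξ in (0)..π, cosh (a * (π - ξ)) * cos (n * ξ)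
      = ∫ ξ in (0)..π, cosh (a * ξ) * cos (n * (π - ξ)) := by
        simpa using intervalIntegral.integral_comp_sub_left (a := 0) (b := π)
          (fun ξ => cosh (a * ξ) * cos (n * (π - ξ))) π
    _ = (-1) ^ n * ∫ ξ in (0)..π, cosh (a * ξ) * cos (n * ξ) := by
        simp_rw [hreflect, mul_left_comm _ ((-1 : ℝ) ^ n)]
        exact intervalIntegral.integral_const_mul _ _
    _ = a * sinh (a * π) / (a ^ 2 + n ^ 2) := by
        rw [integral_cosh_mul_cos_nat_mul ha, ← mul_div_assoc, ← mul_assoc, ← mul_assoc,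
          ← pow_add, Even.neg_one_pow ⟨n, rfl⟩, one_mul]

theorem summable_rpow_mul_div_sq {l p : ℝ} (hl : 0 < l) (hp : p < 3 / 2) {c : ℕ → ℝ}
    (hc : ∀ n, |c n| ≤ 1) :
    Summable fun n : ℕ => (l + (n : ℝ) ^ 2) ^ p * (c n / (l + n ^ 2)) ^ 2 := by
  refine Summable.of_nonneg_of_le (fun n => by positivity) (fun n => ?_)
    (summable_rpow_add_sq hl.le (s := p - 2) (by linarith))
  have hx : (0 : ℝ) < l + n ^ 2 := by positivity
  have hc2 : c n ^ 2 ≤ 1 := by nlinarith [abs_le.mp (hc n), sq_abs (c n)]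
  calc (l + (n : ℝ) ^ 2) ^ p * (c n / (l + n ^ 2)) ^ 2
      = c n ^ 2 * (l + (n : ℝ) ^ 2) ^ (p - 2) := by
        rw [rpow_sub hx, rpow_two]; field_simp
    _ ≤ (l + (n : ℝ) ^ 2) ^ (p - 2) :=
        mul_le_of_le_one_left (rpow_nonneg hx.le _) hc2

theorem setIntegral_Ioo_eq_intervalIntegral {a b : ℝ} (hab : a ≤ b) (f : ℝ → ℝ) :
    ∫ ξ in Ioo a b, f ξ = ∫ ξ in a..b, f ξ := by
  rw [intervalIntegral.integral_of_le hab, integral_Ioc_eq_integral_Ioo]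

theorem integral_neumann_b1_mul_cos {l : ℝ} (hl : 0 < l) (n : ℕ) :
    ∫ ξ in Ioo 0 π, (-cosh (√l * (π - ξ)) / (√l * sinh (√l * π))) * cos (n * ξ) =
      -1 / (l + n ^ 2) := by
  have ha : √l ≠ 0 := (sqrt_pos.mpr hl).ne'
  have hs : sinh (√l * π) ≠ 0 := (sinh_pos_iff.mpr (by positivity)).ne'
  simp_rw [setIntegral_Ioo_eq_intervalIntegral pi_pos.le, neg_div, neg_mul, div_mul_eq_mul_div,
    intervalIntegral.integral_neg, intervalIntegral.integral_div,
    integral_cosh_mul_pi_sub_mul_cos_nat_mul ha, sq_sqrt hl.le]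
  field_simp

theorem integral_neumann_b2_mul_cos {l : ℝ} (hl : 0 < l) (n : ℕ) :
    ∫ ξ in Ioo 0 π, (cosh (√l * ξ) / (√l * sinh (√l * π))) * cos (n * ξ) =
      (-1) ^ n / (l + n ^ 2) := by
  have ha : √l ≠ 0 := (sqrt_pos.mpr hl).ne'
  have hs : sinh (√l * π) ≠ 0 := (sinh_pos_iff.mpr (by positivity)).ne'
  simp_rw [setIntegral_Ioo_eq_intervalIntegral pi_pos.le, div_mul_eq_mul_div,
    intervalIntegral.integral_div, integral_cosh_mul_cos_nat_mul ha, sq_sqrt hl.le]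
  field_simp

/-- Membership in `D((λ-A)^α)` is expressed through the spectral decomposition of `λ - A`:
its eigenfunctions are `cos (nξ)` with eigenvalues `λ + n²`. -/
theorem stmt_17_general (l α : ℝ) (hl : 0 < l) (hα' : α < 3 / 4) :
    Summable (fun n : ℕ => (l + (n : ℝ) ^ 2) ^ (2 * α) *
      (∫ ξ in Set.Ioo 0 Real.pi,
        (-Real.cosh (Real.sqrt l * (Real.pi - ξ)) /
          (Real.sqrt l * Real.sinh (Real.sqrt l * Real.pi))) * Real.cos (n * ξ)) ^ 2) ∧
    Summable (fun n : ℕ => (l + (n : ℝ) ^ 2) ^ (2 * α) *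
      (∫ ξ in Set.Ioo 0 Real.pi,
        (Real.cosh (Real.sqrt l * ξ) /
          (Real.sqrt l * Real.sinh (Real.sqrt l * Real.pi))) * Real.cos (n * ξ)) ^ 2) := by
  simp_rw [integral_neumann_b1_mul_cos hl, integral_neumann_b2_mul_cos hl]
  exact ⟨summable_rpow_mul_div_sq hl (by linarith) fun _ => by norm_num,
    summable_rpow_mul_div_sq hl (by linarith) fun n => by simp⟩

/-- For `λ > 0` and `1/2 < α < 3/4`, the functions `b¹` and `b²` belong to
`D((λ-A)^α)` for the Neumann Laplacian `A` on `(0,π)`.  Membership is expressed through the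
spectral decomposition of `λ - A`: the eigenfunctions are `cos(nξ)` with eigenvalues `λ + n²`,
and `y ∈ D((λ-A)^α)` iff `∑ₙ (λ+n²)^{2α} |⟨y, cos(n·)⟩|² < ∞`. -/
theorem stmt_17 (l α : ℝ) (hl : 0 < l) (hα : 1 / 2 < α) (hα' : α < 3 / 4) :
    Summable (fun n : ℕ => (l + (n : ℝ) ^ 2) ^ (2 * α) *
      (∫ ξ in Set.Ioo 0 Real.pi,
        (-Real.cosh (Real.sqrt l * (Real.pi - ξ)) /
          (Real.sqrt l * Real.sinh (Real.sqrt l * Real.pi))) * Real.cos (n * ξ)) ^ 2) ∧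
    Summable (fun n : ℕ => (l + (n : ℝ) ^ 2) ^ (2 * α) *
      (∫ ξ in Set.Ioo 0 Real.pi,
        (Real.cosh (Real.sqrt l * ξ) /
          (Real.sqrt l * Real.sinh (Real.sqrt l * Real.pi))) * Real.cos (n * ξ)) ^ 2) :=
  stmt_17_general l α hl hα'
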